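/- arXiv:1709.06985 — 3 statements merged into one kernel-verified Lean document; each statement's English description precedes it below -/
import Mathlib

section
/- Let G : ℝ → ℝ be strictly increasing with G(0) = 0, and let a, b ∈ ℝ. Then (a ≥ 0, b ≥ 0, and a·b = 0) holds if and only if G(|a − b|) − G(a) − G(b) = 0. -/
theorem mangasarian_scalar (G : ℝ → ℝ) (hG : StrictMono G) (hG0 : G 0 = 0)
    (a b : ℝ) :
    (0 ≤ a ∧ 0 ≤ b ∧ a * b = 0) ↔ G (|a - b|) - G a - G b = 0 := by
  constructor
  · rintro ⟨ha, hb, hab⟩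
    rcases mul_eq_zero.mp hab with h | h <;> subst h
    · have : |0 - b| = b := by rw [abs_sub_comm]; simpa using abs_of_nonneg hb
      rw [this, hG0]; ring
    · have : |a - 0| = a := by simpa using abs_of_nonneg ha
      rw [this, hG0]; ring
  · intro h
    have h' : G (|a - b|) = G a + G b := by linarith
    have ha : 0 ≤ a := by
      by_contra ha; push_neg at ha
      have h1 : b < |a - b| := by
        have := neg_abs_le (a - b); linarith
      have h2 : G b < G (|a - b|) := hG h1
      have h3 : G a < 0 := hG0 ▸ hG ha
      linarith
    have hb : 0 ≤ b := by
      by_contra hb; push_neg at hb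
      have h1 : a < |a - b| := by
        have := le_abs_self (a - b); linarith
      have h2 : G a < G (|a - b|) := hG h1
      have h3 : G b < 0 := hG0 ▸ hG hb
      linarith
    refine ⟨ha, hb, ?_⟩
    by_contra hab
    have ha' : 0 < a := lt_of_le_of_ne ha (fun e => hab (by rw [← e]; ring))
    have hb' : 0 < b := lt_of_le_of_ne hb (fun e => hab (by rw [← e]; ring))
    have hGa : 0 < G a := hG0 ▸ hG ha'
    have hGb : 0 < G b := hG0 ▸ hG hb'
    rcases le_total a b with hle | hle
    · have h1 : |a - b| < b := by
        rw [abs_of_nonpos (by linarith)]; linarith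
      have := hG h1; linarith
    · have h1 : |a - b| < a := by
        rw [abs_of_nonneg (by linarith)]; linarith
      have := hG h1; linarith
end

section
/- For real numbers a and b, the conditions a ≥ 0, b ≥ 0, and a·b = 0 hold if and only if (1/2)·(|a − b| − a − b) = 0. -/
theorem mangasarian_half (a b : ℝ) :
    (0 ≤ a ∧ 0 ≤ b ∧ a * b = 0) ↔ (1/2) * (|a - b| - a - b) = 0 := by
  constructor
  · rintro ⟨ha, hb, hab⟩
    rcases mul_eq_zero.1 hab with h | h <;> subst h
    · simp [abs_of_nonneg hb]
    · simp [abs_of_nonneg ha]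
  · intro h
    have h' : |a - b| = a + b := by linarith
    rcases abs_cases (a - b) with ⟨h1, h2⟩ | ⟨h1, h2⟩ <;>
      refine ⟨by linarith, by linarith, by nlinarith⟩
end

section
/- Let R ∈ ℝ^{N×q} have full column rank, G̃ ∈ ℝ^{N×N}, Y ∈ ℝ^{N×q}. Then G = G̃ + (Y − G̃·R)·(Rᵀ·R)⁻¹·Rᵀ is the unique minimizer of ‖G − G̃‖_F over all matrices G ∈ ℝ^{N×N} satisfying G·R = Y, where ‖·‖_F is the Frobenius norm. -/
open Matrix

/-- The Frobenius norm of a real matrix. -/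
noncomputable def frobNorm {N M : ℕ} (A : Matrix (Fin N) (Fin M) ℝ) : ℝ :=
  Real.sqrt (∑ i, ∑ j, (A i j) ^ 2)

lemma inner_eq_trace {N : ℕ} (A B : Matrix (Fin N) (Fin N) ℝ) :
    ∑ i, ∑ j, A i j * B i j = Matrix.trace (A * Bᵀ) := by
  simp [Matrix.trace, Matrix.mul_apply, Matrix.diag]

theorem broyden_update_is_unique_minimizer {N q : ℕ}
    (R Y : Matrix (Fin N) (Fin q) ℝ) (Gt : Matrix (Fin N) (Fin N) ℝ)
    (hR : IsUnit (Rᵀ * R)) :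
    (Gt + (Y - Gt * R) * (Rᵀ * R)⁻¹ * Rᵀ) * R = Y ∧
    ∀ H : Matrix (Fin N) (Fin N) ℝ, H * R = Y →
      frobNorm ((Gt + (Y - Gt * R) * (Rᵀ * R)⁻¹ * Rᵀ) - Gt) ≤ frobNorm (H - Gt) ∧
      (frobNorm (H - Gt) = frobNorm ((Gt + (Y - Gt * R) * (Rᵀ * R)⁻¹ * Rᵀ) - Gt) →
        H = Gt + (Y - Gt * R) * (Rᵀ * R)⁻¹ * Rᵀ) := by
  have hd : IsUnit (Rᵀ * R).det := (Matrix.isUnit_iff_isUnit_det _).mp hR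
  have hinv : (Rᵀ * R)⁻¹ * (Rᵀ * R) = 1 := Matrix.nonsing_inv_mul _ hd
  set P : Matrix (Fin N) (Fin N) ℝ := R * ((Rᵀ * R)⁻¹ * Rᵀ) with hP
  have hPsymm : Pᵀ = P := by
    rw [hP, Matrix.transpose_mul, Matrix.transpose_mul,
      Matrix.transpose_nonsing_inv, Matrix.transpose_mul, Matrix.transpose_transpose, Matrix.mul_assoc]
  have hPP : P * P = P := by
    calc P * P = R * ((Rᵀ * R)⁻¹ * ((Rᵀ * R) * ((Rᵀ * R)⁻¹ * Rᵀ))) := by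
          simp only [hP, Matrix.mul_assoc]
      _ = P := by rw [← Matrix.mul_assoc ((Rᵀ * R)⁻¹), hinv, Matrix.one_mul, hP]
  set D : Matrix (Fin N) (Fin N) ℝ := (Y - Gt * R) * (Rᵀ * R)⁻¹ * Rᵀ with hDdef
  have hfirst : (Gt + D) * R = Y := by
    rw [Matrix.add_mul, hDdef, Matrix.mul_assoc ((Y - Gt * R) * (Rᵀ * R)⁻¹),
      Matrix.mul_assoc (Y - Gt * R), hinv, Matrix.mul_one]
    abel
  refine ⟨hfirst, fun H hH => ?_⟩
  set F : Matrix (Fin N) (Fin N) ℝ := H - Gt with hFdef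
  have hD : D = F * P := by
    have hFR : F * R = Y - Gt * R := by rw [hFdef, Matrix.sub_mul, hH]
    rw [hDdef, ← hFR, hP, Matrix.mul_assoc, Matrix.mul_assoc]
  have hcrossM : (F - D) * Dᵀ = 0 := by
    rw [hD, Matrix.transpose_mul, hPsymm, Matrix.sub_mul,
      Matrix.mul_assoc F P (P * Fᵀ), ← Matrix.mul_assoc P P Fᵀ, hPP]
    exact sub_self _
  have hcross : ∑ i, ∑ j, (F - D) i j * D i j = 0 := by
    rw [inner_eq_trace, hcrossM, Matrix.trace_zero]
  have hpyth : (∑ i, ∑ j, F i j ^ 2)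
      = (∑ i, ∑ j, D i j ^ 2) + (∑ i, ∑ j, (F - D) i j ^ 2) := by
    have expand : (∑ i, ∑ j, F i j ^ 2)
        = (∑ i, ∑ j, (D i j ^ 2 + (F - D) i j ^ 2 + 2 * ((F - D) i j * D i j))) := by
      refine Finset.sum_congr rfl fun i _ => Finset.sum_congr rfl fun j _ => ?_
      simp only [Matrix.sub_apply]
      ring
    rw [expand]
    simp only [Finset.sum_add_distrib, ← Finset.mul_sum]
    rw [hcross]
    ring
  have hDnn : (0 : ℝ) ≤ ∑ i, ∑ j, D i j ^ 2 :=
    Finset.sum_nonneg fun i _ => Finset.sum_nonneg fun j _ => sq_nonneg _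
  have hFDnn : (0 : ℝ) ≤ ∑ i, ∑ j, (F - D) i j ^ 2 :=
    Finset.sum_nonneg fun i _ => Finset.sum_nonneg fun j _ => sq_nonneg _
  have hle : (∑ i, ∑ j, D i j ^ 2) ≤ ∑ i, ∑ j, F i j ^ 2 := by
    rw [hpyth]; linarith
  have hsimp : (Gt + D) - Gt = D := by abel
  constructor
  · rw [frobNorm, frobNorm, hsimp]
    exact Real.sqrt_le_sqrt hle
  · intro heq
    rw [frobNorm, frobNorm, hsimp] at heq
    have hS : (∑ i, ∑ j, F i j ^ 2) = ∑ i, ∑ j, D i j ^ 2 := by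
      have h1 := Real.sq_sqrt (le_trans hDnn hle)
      have h2 := Real.sq_sqrt hDnn
      rw [← h1, ← h2, heq]
    have hzero : (∑ i, ∑ j, (F - D) i j ^ 2) = 0 := by linarith [hpyth.symm, hS]
    have hFD : F - D = 0 := by
      ext i j
      have h1 : ∀ i ∈ Finset.univ, (∑ j, (F - D) i j ^ 2) = 0 := by
        intro i _
        have := Finset.sum_eq_zero_iff_of_nonneg
          (fun i _ => Finset.sum_nonneg fun j _ => sq_nonneg ((F - D) i j)) |>.mp hzero
        exact this i (Finset.mem_univ i)
      have h2 := Finset.sum_eq_zero_iff_of_nonneg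
        (fun j _ => sq_nonneg ((F - D) i j)) |>.mp (h1 i (Finset.mem_univ i))
      have := h2 j (Finset.mem_univ j)
      simpa using pow_eq_zero_iff (n := 2) (by norm_num) |>.mp this
    have hHD : H - Gt = D := sub_eq_zero.mp hFD
    exact eq_add_of_sub_eq' hHD
end
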